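/- arXiv:2109.13475 — 5 statements merged into one kernel-verified Lean document; each statement's English description precedes it below -/
import Mathlib

section
/- Let L be a graph and s a nonnegative integer. There is a 2-star decomposition of the join L ∨ K_s if and only if either (i) s = 0 and each connected component of L has an even number of edges, or (ii) s ≥ 1 and |E(L ∨ K_s)| is even. -/
/-- The star with centre `c` and leaf set `Lf` is a `k`-star in `G`. -/
def IsStarIn {V : Type*} (G : SimpleGraph V) (k : ℕ) (c : V) (Lf : Finset V) : Prop :=
  Lf.card = k ∧ ∀ v ∈ Lf, G.Adj c v

/-- The edge set of the star with centre `c` and leaf set `Lf`. -/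
def starEdges {V : Type*} [DecidableEq V] (c : V) (Lf : Finset V) : Finset (Sym2 V) :=
  Lf.image (fun v => s(c, v))

/-- A partial `k`-star decomposition of `G`: a set of `k`-stars of `G` whose edge sets are
pairwise disjoint. -/
def IsPartialStarDecompOn {V : Type*} [DecidableEq V] (G : SimpleGraph V) (k : ℕ)
    (D : Finset (V × Finset V)) : Prop :=
  (∀ p ∈ D, IsStarIn G k p.1 p.2) ∧
  (∀ p ∈ D, ∀ q ∈ D, p ≠ q → Disjoint (starEdges p.1 p.2) (starEdges q.1 q.2))

/-- A `k`-star decomposition of `G`: a partial one whose stars' edge sets cover `E(G)`. -/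
def IsStarDecompOn {V : Type*} [DecidableEq V] (G : SimpleGraph V) (k : ℕ)
    (D : Finset (V × Finset V)) : Prop :=
  IsPartialStarDecompOn G k D ∧ ∀ e ∈ G.edgeSet, ∃ p ∈ D, e ∈ starEdges p.1 p.2

/-- The leave of a partial star decomposition `D` of `G`: the graph on `V(G)` consisting of
the edges of `G` lying in no star of `D`. -/
def leaveOf {V : Type*} [DecidableEq V] (G : SimpleGraph V) (D : Finset (V × Finset V)) :
    SimpleGraph V :=
  G.deleteEdges ↑(D.biUnion fun p => starEdges p.1 p.2)

/-- The join `L ∨ K_s` of `L` with a complete graph on `s` new vertices. -/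
def joinK {V : Type*} (L : SimpleGraph V) (s : ℕ) : SimpleGraph (V ⊕ Fin s) where
  Adj x y := x ≠ y ∧ ∀ a b, x = Sum.inl a → y = Sum.inl b → L.Adj a b
  symm := by
    constructor
    rintro x y ⟨hxy, h⟩
    exact ⟨hxy.symm, fun a b ha hb => (h b a hb ha).symm⟩
  loopless := by constructor; rintro x ⟨h, -⟩; exact h rfl

/-- The independence number `α(L)` of a graph `L`. -/
noncomputable def indepNumber {V : Type*} [Fintype V] (L : SimpleGraph V) : ℕ :=
  sSup {m : ℕ | ∃ t : Finset V, t.card = m ∧ ∀ x ∈ t, ∀ y ∈ t, x ≠ y → ¬ L.Adj x y}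

/-- Push a star on `Fin n` forward to `Fin N` along the canonical inclusion. -/
def castStar {n N : ℕ} (h : n ≤ N) (p : Fin n × Finset (Fin n)) :
    Fin N × Finset (Fin N) :=
  (Fin.castLE h p.1, p.2.image (Fin.castLE h))

/-- The partial `k`-star decomposition `A` of `K_n` can be embedded in a `k`-star
decomposition of `K_{n+s}`. -/
def EmbedsIn (k n s : ℕ) (A : Finset (Fin n × Finset (Fin n))) : Prop :=
  ∃ B : Finset (Fin (n + s) × Finset (Fin (n + s))),
    IsStarDecompOn (⊤ : SimpleGraph (Fin (n + s))) k B ∧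
    A.image (castStar (Nat.le_add_right n s)) ⊆ B

/-- `Δ_T = |E_T| - k·∑_{x∈T} γ(x)`, where `E_T` is the set of edges of `G` incident with at
least one vertex of `T`. -/
noncomputable def starDelta {V : Type*} (G : SimpleGraph V) (k : ℕ) (γ : V → ℕ)
    (T : Finset V) : ℤ :=
  ({e ∈ G.edgeSet | ∃ v ∈ T, v ∈ e}.ncard : ℤ) - k * ∑ x ∈ T, γ x

/-!
A `2`-star decomposition of `G` yields an orientation of `G` in which every in-degree is even
(point each edge at the centre of its star), and conversely such an orientation yields a
decomposition by pairing off the edges entering each vertex. The in-degrees over a connected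
component add up to its number of edges, which gives necessity. For sufficiency start from any
orientation: in each component the vertices of odd in-degree come in even number, and reversing
a path between two of them makes both even while preserving every other parity.
For the join, `L ∨ K₀ ≅ L`, and for `s ≥ 1` the graph `L ∨ K_s` is connected.
-/

open Finset

lemma Finset.even_card_symmDiff_iff {α : Type*} [DecidableEq α] (s t : Finset α) :
    Even #(symmDiff s t) ↔ (Even #s ↔ Even #t) := by
  have hcard : #(symmDiff s t) + 2 * #(s ∩ t) = #s + #t := by
    have hle := card_le_card (inter_subset_union (s := s) (t := t))
    rw [symmDiff_eq_sup_sdiff_inf, sup_eq_union, inf_eq_inter,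
      card_sdiff_of_subset inter_subset_union, ← card_union_add_card_inter s t]
    omega
  rw [← Nat.even_add, ← hcard]
  simp [parity_simps]

lemma Finset.even_card_filter_sdiff {α : Type*} [DecidableEq α] {p : α → Prop}
    [DecidablePred p] {E P : Finset α} (hPE : P ⊆ E) (hP : Even #{x ∈ P | p x})
    (hE : Even #{x ∈ E | p x}) :
    Even #{x ∈ E \ P | p x} := by
  have hsplit : #{x ∈ E \ P | p x} + #{x ∈ P | p x} = #{x ∈ E | p x} := by
    rw [← card_union_of_disjoint (disjoint_filter_filter sdiff_disjoint), ← filter_union,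
      sdiff_union_of_subset hPE]
  exact (Nat.even_add.mp (hsplit ▸ hE)).mpr hP

lemma Sym2.other_eq_iff {α : Type*} {z : Sym2 α} (hz : ¬z.IsDiag) {a v : α} (ha : a ∈ z) :
    Sym2.Mem.other ha = v ↔ a ≠ v ∧ v ∈ z := by
  have hne := Sym2.other_ne hz ha
  have hv : v ∈ z ↔ v = a ∨ v = Sym2.Mem.other ha := by
    conv_lhs => rw [← Sym2.other_spec ha]
    exact Sym2.mem_iff
  grind

namespace SimpleGraph

variable {V : Type*} {G : SimpleGraph V}

def ConnectedComponent.edgeSet (c : G.ConnectedComponent) : Set (Sym2 V) :=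
  {e ∈ G.edgeSet | ∀ x ∈ e, G.connectedComponentMk x = c}

lemma connectedComponentMk_eq_of_mem_edge {e : Sym2 V} (he : e ∈ G.edgeSet) {x y : V}
    (hx : x ∈ e) (hy : y ∈ e) : G.connectedComponentMk x = G.connectedComponentMk y := by
  induction e using Sym2.ind with
  | h a b =>
  have hab := ConnectedComponent.connectedComponentMk_eq_of_adj (G.mem_edgeSet.mp he)
  rcases Sym2.mem_iff.mp hx with rfl | rfl <;> rcases Sym2.mem_iff.mp hy with rfl | rfl <;>
    simp [hab]

lemma Preconnected.connectedComponent_edgeSet (hG : G.Preconnected)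
    (c : G.ConnectedComponent) : c.edgeSet = G.edgeSet := by
  obtain ⟨v, rfl⟩ := c.exists_rep
  ext e
  exact ⟨fun he => he.1, fun he => ⟨he, fun x _ => ConnectedComponent.sound (hG x v)⟩⟩

end SimpleGraph

section StarDecomposition

variable {V : Type*} [DecidableEq V] {G : SimpleGraph V} {k : ℕ}

lemma mem_starEdges {c : V} {Lf : Finset V} {e : Sym2 V} :
    e ∈ starEdges c Lf ↔ ∃ v ∈ Lf, s(c, v) = e :=
  mem_image

lemma card_starEdges (c : V) (Lf : Finset V) : #(starEdges c Lf) = #Lf :=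
  card_image_of_injective _ fun _ _ h => Sym2.congr_right.mp h

lemma IsPartialStarDecompOn.insert {D : Finset (V × Finset V)} {c : V} {Lf : Finset V}
    (hD : IsPartialStarDecompOn G k D) (hstar : IsStarIn G k c Lf)
    (hdisj : Disjoint (starEdges c Lf) (D.biUnion fun p => starEdges p.1 p.2)) :
    IsPartialStarDecompOn G k (insert (c, Lf) D) := by
  have hdisj' : ∀ q ∈ D, Disjoint (starEdges c Lf) (starEdges q.1 q.2) := fun q hq =>
    hdisj.mono_right (subset_biUnion_of_mem (fun p => starEdges p.1 p.2) hq)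
  refine ⟨by simpa [hstar] using hD.1, ?_⟩
  simp only [mem_insert]
  rintro p (rfl | hp) q (rfl | hq) hpq
  · exact absurd rfl hpq
  · exact hdisj' q hq
  · exact (hdisj' p hp).symm
  · exact hD.2 p hp q hq hpq

lemma IsStarDecompOn.dvd_ncard_edgeSet {D : Finset (V × Finset V)}
    (hD : IsStarDecompOn G k D) (c : G.ConnectedComponent) : k ∣ c.edgeSet.ncard := by
  classical
  obtain ⟨⟨hstar, hdisj⟩, hcover⟩ := hD
  set Dc := D.filter fun p => G.connectedComponentMk p.1 = c
  have hedges : c.edgeSet = ↑(Dc.biUnion fun p => starEdges p.1 p.2) := by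
    ext e
    simp only [SimpleGraph.ConnectedComponent.edgeSet, Set.mem_ofPred_eq, coe_biUnion,
      mem_coe, Set.mem_iUnion, mem_filter, Dc, exists_prop]
    constructor
    · rintro ⟨he, hc⟩
      obtain ⟨p, hp, hep⟩ := hcover e he
      obtain ⟨v, -, rfl⟩ := mem_starEdges.mp hep
      exact ⟨p, ⟨hp, hc _ (Sym2.mem_mk_left _ _)⟩, hep⟩
    · rintro ⟨p, ⟨hp, rfl⟩, hep⟩
      obtain ⟨v, hv, rfl⟩ := mem_starEdges.mp hep
      have hadj := (hstar p hp).2 v hv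
      refine ⟨hadj, fun x hx => ?_⟩
      rcases Sym2.mem_iff.mp hx with rfl | rfl
      · rfl
      · exact (SimpleGraph.ConnectedComponent.connectedComponentMk_eq_of_adj hadj).symm
  rw [hedges, Set.ncard_coe_finset, card_biUnion fun p hp q hq =>
    hdisj p (mem_filter.mp hp).1 q (mem_filter.mp hq).1]
  refine dvd_sum fun p hp => ?_
  rw [card_starEdges, (hstar p (mem_filter.mp hp).1).1]

lemma IsStarDecompOn.map {W : Type*} [DecidableEq W] {H : SimpleGraph W} (φ : G ≃g H)
    {D : Finset (V × Finset V)} (hD : IsStarDecompOn G k D) :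
    IsStarDecompOn H k (D.image fun p => (φ p.1, p.2.image φ)) := by
  obtain ⟨⟨hstar, hdisj⟩, hcover⟩ := hD
  have hinj : Function.Injective φ := φ.injective
  have hmap : ∀ (c : V) (Lf : Finset V),
      starEdges (φ c) (Lf.image φ) = (starEdges c Lf).image (Sym2.map φ) := by
    intro c Lf
    simp [starEdges, image_image, Function.comp_def]
  refine ⟨⟨?_, ?_⟩, ?_⟩
  · simp only [mem_image, forall_exists_index, and_imp]
    rintro _ p hp rfl
    refine ⟨by rw [card_image_of_injective _ hinj, (hstar p hp).1], ?_⟩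
    simpa using fun v hv => φ.map_adj_iff.mpr ((hstar p hp).2 v hv)
  · simp only [mem_image, forall_exists_index, and_imp]
    rintro _ p hp rfl _ q hq rfl hpq
    rw [hmap, hmap]
    exact (disjoint_image (Sym2.map.injective hinj)).mpr
      (hdisj p hp q hq (by rintro rfl; exact hpq rfl))
  · intro e he
    obtain ⟨p, hp, hpe⟩ := hcover (e.map φ.symm) (φ.symm.map_mem_edgeSet_iff.mpr he)
    refine ⟨_, mem_image_of_mem _ hp, ?_⟩
    rw [hmap]
    simpa [Sym2.map_map] using mem_image_of_mem (Sym2.map φ) hpe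

lemma exists_partialStarDecomp_of_even_fibers (head : Sym2 V → V) (E : Finset (Sym2 V))
    (hE : ↑E ⊆ G.edgeSet) (hhead : ∀ e ∈ E, head e ∈ e)
    (heven : ∀ v, Even #{e ∈ E | head e = v}) :
    ∃ D, IsPartialStarDecompOn G 2 D ∧ D.biUnion (fun p => starEdges p.1 p.2) = E := by
  induction E using Finset.strongInduction with
  | H E ih =>
  rcases E.eq_empty_or_nonempty with rfl | ⟨e, he⟩
  · exact ⟨∅, ⟨by simp, by simp⟩, by simp⟩
  set c := head e
  have hcard : 1 < #{f ∈ E | head f = c} := by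
    obtain ⟨m, hm⟩ := heven c
    have : 0 < #{f ∈ E | head f = c} := card_pos.mpr ⟨e, mem_filter.mpr ⟨he, rfl⟩⟩
    omega
  obtain ⟨e₁, he₁, e₂, he₂, hne⟩ := one_lt_card.mp hcard
  rw [mem_filter] at he₁ he₂
  obtain ⟨a, rfl⟩ := Sym2.mem_iff_exists.mp (he₁.2 ▸ hhead e₁ he₁.1)
  obtain ⟨b, rfl⟩ := Sym2.mem_iff_exists.mp (he₂.2 ▸ hhead e₂ he₂.1)
  have hab : a ≠ b := by rintro rfl; exact hne rfl
  set P : Finset (Sym2 V) := {s(c, a), s(c, b)}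
  have hPE : P ⊆ E := by simp [P, insert_subset_iff, he₁.1, he₂.1]
  have hstar : starEdges c {a, b} = P := by simp [starEdges, P]
  have hPeven : ∀ v, Even #{f ∈ P | head f = v} := by
    intro v
    by_cases hv : c = v
    · rw [filter_true_of_mem (by simp [P, ← hv, he₁.2, he₂.2]), card_pair hne]
      exact even_two
    · rw [filter_false_of_mem (by simp [P, he₁.2, he₂.2, hv])]
      exact Even.zero
  obtain ⟨D, hD, hDE⟩ := ih (E \ P) (sdiff_ssubset hPE (by simp [P]))
    (fun f hf => hE (mem_sdiff.mp hf).1) (fun f hf => hhead f (mem_sdiff.mp hf).1)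
    (fun v => even_card_filter_sdiff hPE (hPeven v) (heven v))
  refine ⟨insert (c, {a, b}) D, hD.insert ⟨card_pair hab, ?_⟩ ?_, ?_⟩
  · simpa using ⟨hE he₁.1, hE he₂.1⟩
  · rw [hDE, hstar]; exact disjoint_sdiff
  · rw [biUnion_insert, hDE, hstar, union_sdiff_of_subset hPE]

end StarDecomposition

section EvenOrientation

variable {V : Type*} [DecidableEq V] {G : SimpleGraph V}

-- An orientation of `G` is encoded by a map `head : Sym2 V → V` with `head e ∈ e` for every
-- edge `e`.
noncomputable def reverseOn (S : Finset (Sym2 V)) (head : Sym2 V → V) (e : Sym2 V) : V :=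
  if h : e ∈ S ∧ head e ∈ e then Sym2.Mem.other h.2 else head e

lemma reverseOn_mem {S : Finset (Sym2 V)} {head : Sym2 V → V} {e : Sym2 V} (h : head e ∈ e) :
    reverseOn S head e ∈ e := by
  unfold reverseOn
  split_ifs
  · exact Sym2.other_mem _
  · exact h

variable [Fintype V] [DecidableRel G.Adj]

def SimpleGraph.inEdges (G : SimpleGraph V) [DecidableRel G.Adj] (head : Sym2 V → V) (v : V) :
    Finset (Sym2 V) :=
  {e ∈ G.edgeFinset | head e = v}

open Classical in
lemma sum_card_inEdges_eq_ncard_edgeSet {head : Sym2 V → V}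
    (hhead : ∀ e ∈ G.edgeSet, head e ∈ e) (c : G.ConnectedComponent) :
    ∑ v with G.connectedComponentMk v = c, #(G.inEdges head v) = c.edgeSet.ncard := by
  have hc : c.edgeSet = ↑{e ∈ G.edgeFinset | G.connectedComponentMk (head e) = c} := by
    ext e
    simp only [SimpleGraph.ConnectedComponent.edgeSet, Set.mem_ofPred_eq, coe_filter,
      SimpleGraph.mem_edgeFinset]
    refine and_congr_right fun he => ⟨fun h => h _ (hhead e he), fun h x hx => ?_⟩
    rw [← h, G.connectedComponentMk_eq_of_mem_edge he hx (hhead e he)]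
  rw [hc, Set.ncard_coe_finset, card_eq_sum_card_fiberwise (f := head)
    (t := {v | G.connectedComponentMk v = c}) fun e he => by simpa using (mem_filter.mp he).2]
  refine sum_congr rfl fun v hv => congrArg card ?_
  ext e
  simp only [SimpleGraph.inEdges, mem_filter] at hv ⊢
  grind

lemma exists_reachable_odd_card_inEdges (hG : ∀ c : G.ConnectedComponent, Even c.edgeSet.ncard)
    {head : Sym2 V → V} (hhead : ∀ e ∈ G.edgeSet, head e ∈ e) {x : V}
    (hx : Odd #(G.inEdges head x)) :
    ∃ y ≠ x, G.Reachable x y ∧ Odd #(G.inEdges head y) := by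
  classical
  have heven := hG (G.connectedComponentMk x)
  rw [← sum_card_inEdges_eq_ncard_edgeSet hhead, even_sum_iff_even_card_odd, filter_filter]
    at heven
  set O := ({v | G.connectedComponentMk v = G.connectedComponentMk x ∧
    Odd #(G.inEdges head v)} : Finset V)
  have hxO : x ∈ O := by simp [O, hx]
  have hO : 1 < #O := by
    obtain ⟨m, hm⟩ := heven
    have := card_pos.mpr ⟨x, hxO⟩
    omega
  obtain ⟨y, hyO, hyx⟩ := exists_mem_ne hO x
  simp only [O, mem_filter, mem_univ, true_and] at hyO
  exact ⟨y, hyx, (SimpleGraph.ConnectedComponent.exact hyO.1).symm, hyO.2⟩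

lemma inEdges_reverseOn {S : Finset (Sym2 V)} (hS : S ⊆ G.edgeFinset) {head : Sym2 V → V}
    (hhead : ∀ e ∈ G.edgeSet, head e ∈ e) (v : V) :
    G.inEdges (reverseOn S head) v = symmDiff (G.inEdges head v) {e ∈ S | v ∈ e} := by
  ext e
  simp only [SimpleGraph.inEdges, mem_symmDiff, mem_filter]
  by_cases heS : e ∈ S
  · have he := SimpleGraph.mem_edgeFinset.mp (hS heS)
    have hrev : reverseOn S head e = v ↔ head e ≠ v ∧ v ∈ e := by
      rw [reverseOn, dif_pos ⟨heS, hhead e he⟩,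
        Sym2.other_eq_iff (G.not_isDiag_of_mem_edgeSet he)]
    have hmem := hhead e he
    rw [hrev]
    grind
  · have hrev : reverseOn S head e = head e := dif_neg fun h => heS h.1
    simp [hrev, heS]

lemma even_card_inEdges_reverseOn_iff {x y : V} {p : G.Walk x y} (hp : p.IsTrail) (hxy : x ≠ y)
    {head : Sym2 V → V} (hhead : ∀ e ∈ G.edgeSet, head e ∈ e) (v : V) :
    Even #(G.inEdges (reverseOn p.edges.toFinset head) v) ↔
      (Even #(G.inEdges head v) ↔ v ≠ x ∧ v ≠ y) := by
  have hS : p.edges.toFinset ⊆ G.edgeFinset := fun e he =>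
    SimpleGraph.mem_edgeFinset.mpr (p.edges_subset_edgeSet (List.mem_toFinset.mp he))
  have hcount : #{e ∈ p.edges.toFinset | v ∈ e} = p.edges.countP (v ∈ ·) := by
    rw [List.countP_eq_length_filter, ← List.toFinset_card_of_nodup (hp.edges_nodup.filter _),
      List.toFinset_filter]
    simp
  rw [inEdges_reverseOn hS hhead, even_card_symmDiff_iff, hcount,
    hp.even_countP_edges_iff v, imp_iff_right hxy]

lemma exists_orientation_card_odd_inEdges_lt
    (hG : ∀ c : G.ConnectedComponent, Even c.edgeSet.ncard) {head : Sym2 V → V}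
    (hhead : ∀ e ∈ G.edgeSet, head e ∈ e) {x : V} (hx : Odd #(G.inEdges head x)) :
    ∃ head' : Sym2 V → V, (∀ e ∈ G.edgeSet, head' e ∈ e) ∧
      #{v | Odd #(G.inEdges head' v)} < #{v | Odd #(G.inEdges head v)} := by
  obtain ⟨y, hyx, ⟨q⟩, hy⟩ := exists_reachable_odd_card_inEdges hG hhead hx
  set p := q.toPath
  set O : Finset V := {v | Odd #(G.inEdges head v)}
  have hO : ({v | Odd #(G.inEdges (reverseOn p.1.edges.toFinset head) v)} : Finset V) =
      O \ {x, y} := by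
    ext v
    simp only [O, mem_filter, mem_univ, true_and, mem_sdiff, mem_insert, mem_singleton,
      ← Nat.not_even_iff_odd, even_card_inEdges_reverseOn_iff p.2.isTrail hyx.symm hhead]
    by_cases hvx : v = x
    · subst hvx; simp [Nat.not_even_iff_odd.mpr hx]
    by_cases hvy : v = y
    · subst hvy; simp [Nat.not_even_iff_odd.mpr hy, hyx]
    simp [hvx, hvy]
  have hxyO : {x, y} ⊆ O := by simp [O, insert_subset_iff, hx, hy]
  have h2 := card_le_card hxyO
  rw [card_pair hyx.symm] at h2
  refine ⟨reverseOn p.1.edges.toFinset head, fun e he => reverseOn_mem (hhead e he), ?_⟩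
  rw [hO, card_sdiff_of_subset hxyO, card_pair hyx.symm]
  omega

theorem exists_orientation_even_card_inEdges
    (hG : ∀ c : G.ConnectedComponent, Even c.edgeSet.ncard) :
    ∃ head : Sym2 V → V, (∀ e ∈ G.edgeSet, head e ∈ e) ∧
      ∀ v, Even #(G.inEdges head v) := by
  obtain ⟨head, hhead, hmin⟩ :=
    (measure fun head : Sym2 V → V => #{v | Odd #(G.inEdges head v)}).wf.has_min
      {head | ∀ e ∈ G.edgeSet, head e ∈ e}
      ⟨fun e => e.out.1, fun e _ => Sym2.out_fst_mem e⟩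
  refine ⟨head, hhead, fun x => Nat.not_odd_iff_even.mp fun hx => ?_⟩
  obtain ⟨head', hhead', hlt⟩ := exists_orientation_card_odd_inEdges_lt hG hhead hx
  exact hmin head' hhead' hlt

end EvenOrientation

theorem exists_starDecomp_two_iff {V : Type*} [Fintype V] [DecidableEq V] (G : SimpleGraph V) :
    (∃ D, IsStarDecompOn G 2 D) ↔ ∀ c : G.ConnectedComponent, Even c.edgeSet.ncard := by
  classical
  refine ⟨fun ⟨D, hD⟩ c => even_iff_two_dvd.mpr (hD.dvd_ncard_edgeSet c), fun hG => ?_⟩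
  obtain ⟨head, hhead, heven⟩ := exists_orientation_even_card_inEdges hG
  obtain ⟨D, hD, hDE⟩ := exists_partialStarDecomp_of_even_fibers head G.edgeFinset
    G.coe_edgeFinset.le (fun e he => hhead e (SimpleGraph.mem_edgeFinset.mp he)) heven
  refine ⟨D, hD, fun e he => ?_⟩
  rwa [← SimpleGraph.mem_edgeFinset, ← hDE, mem_biUnion] at he

section Join

variable {V : Type*} (L : SimpleGraph V)

def joinKZeroIso : L ≃g joinK L 0 where
  toEquiv := (Equiv.sumEmpty V (Fin 0)).symm
  map_rel_iff' {a b} :=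
    ⟨fun h => h.2 a b rfl rfl,
      fun h => ⟨by simpa using h.ne, by rintro _ _ ⟨⟩ ⟨⟩; exact h⟩⟩

lemma joinK_preconnected {s : ℕ} (hs : 0 < s) : (joinK L s).Preconnected := by
  have hr : ∀ x, (joinK L s).Reachable x (Sum.inr ⟨0, hs⟩) := by
    intro x
    by_cases hx : x = Sum.inr ⟨0, hs⟩
    · rw [hx]
    · exact SimpleGraph.Adj.reachable ⟨hx, by simp⟩
  exact fun x y => (hr x).trans (hr y).symm

end Join

/-- `L ∨ K_s` has a 2-star decomposition iff `s = 0` and each connected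
component of `L` has an even number of edges, or `s ≥ 1` and `|E(L ∨ K_s)|` is even. -/
theorem stmt3 {V : Type*} [Fintype V] [DecidableEq V] (L : SimpleGraph V) (s : ℕ) :
    (∃ D, IsStarDecompOn (joinK L s) 2 D) ↔
      ((s = 0 ∧ ∀ c : L.ConnectedComponent,
          Even {e ∈ L.edgeSet | ∀ v ∈ e, L.connectedComponentMk v = c}.ncard) ∨
       (1 ≤ s ∧ Even (joinK L s).edgeSet.ncard)) := by
  rcases Nat.eq_zero_or_pos s with rfl | hs
  · have hiso : (∃ D, IsStarDecompOn (joinK L 0) 2 D) ↔ ∃ D, IsStarDecompOn L 2 D :=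
      ⟨fun ⟨_, hD⟩ => ⟨_, hD.map (joinKZeroIso L).symm⟩,
        fun ⟨_, hD⟩ => ⟨_, hD.map (joinKZeroIso L)⟩⟩
    rw [hiso, exists_starDecomp_two_iff]
    simp [SimpleGraph.ConnectedComponent.edgeSet]
  · have : Nonempty (joinK L s).ConnectedComponent :=
      ⟨(joinK L s).connectedComponentMk (Sum.inr ⟨0, hs⟩)⟩
    rw [exists_starDecomp_two_iff]
    simp [(joinK_preconnected L hs).connectedComponent_edgeSet, hs.ne', Nat.one_le_iff_ne_zero]
end

section
/- Let k ≥ 2 be an integer and let G be a graph equipped with a k-precentral function γ. For T ⊆ V(G) set Δ_T = |E_T| − k·Σ_{x∈T} γ(x), where E_T is the set of edges of G incident with at least one vertex of T, and let Δ be the minimum of Δ_T over all subsets T of V(G). If T is a subset of V(G) with Δ_T = Δ which has minimum cardinality among all subsets attaining Δ, then γ(x) ≥ 1 for every x ∈ T. -/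
/-! Deleting a vertex of weight zero from `T` cannot increase `Δ_T`, so a smallest minimiser
contains no such vertex. -/

theorem starDelta_le_of_subset {V : Type*} [Finite V] (G : SimpleGraph V) (k : ℕ) (γ : V → ℕ)
    {S T : Finset V} (hST : S ⊆ T) (hγ : ∀ x ∈ T, x ∉ S → γ x = 0) :
    starDelta G k γ S ≤ starDelta G k γ T := by
  have hedges :
      {e ∈ G.edgeSet | ∃ v ∈ S, v ∈ e}.ncard ≤ {e ∈ G.edgeSet | ∃ v ∈ T, v ∈ e}.ncard :=
    Set.ncard_le_ncard (fun e ⟨he, v, hv, hve⟩ => ⟨he, v, hST hv, hve⟩) (Set.toFinite _)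
  have hweight : ∑ x ∈ S, γ x = ∑ x ∈ T, γ x := Finset.sum_subset hST hγ
  unfold starDelta
  rw [hweight]
  exact sub_le_sub_right (by exact_mod_cast hedges) _

theorem stmt5_general {V : Type*} [Fintype V] (k : ℕ)
    (G : SimpleGraph V) (γ : V → ℕ)
    (T : Finset V)
    (hmin : ∀ T' : Finset V, starDelta G k γ T ≤ starDelta G k γ T')
    (hcard : ∀ T' : Finset V, starDelta G k γ T' = starDelta G k γ T → T.card ≤ T'.card) :
    ∀ x ∈ T, 1 ≤ γ x := by
  classical
  intro x hx
  by_contra hγx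
  have hle : starDelta G k γ (T.erase x) ≤ starDelta G k γ T :=
    starDelta_le_of_subset G k γ (T.erase_subset x) fun y hyT hy => by
      obtain rfl : y = x := by simpa [hyT] using hy
      omega
  have hcard_le := hcard _ (le_antisymm hle (hmin _))
  have hcard_lt := Finset.card_erase_lt_of_mem hx
  omega

/-- if `T` attains the minimum value of `Δ` and, subject to this, has minimum
cardinality, then `γ x ≥ 1` for every `x ∈ T`. -/
theorem stmt5 {V : Type*} [Fintype V] (k : ℕ) (hk : 2 ≤ k)
    (G : SimpleGraph V) (γ : V → ℕ)
    (hγ : k * ∑ x, γ x = G.edgeSet.ncard)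
    (T : Finset V)
    (hmin : ∀ T' : Finset V, starDelta G k γ T ≤ starDelta G k γ T')
    (hcard : ∀ T' : Finset V, starDelta G k γ T' = starDelta G k γ T → T.card ≤ T'.card) :
    ∀ x ∈ T, 1 ≤ γ x :=
  stmt5_general k G γ T hmin hcard
end

section
/- Let k ≥ 2 be an integer, let G be a graph, let U be a pairwise twin subset of V(G), and let γ be a k-precentral function for G. For T ⊆ V(G) set Δ_T = |E_T| − k·Σ_{x∈T} γ(x), where E_T is the set of edges of G incident with at least one vertex of T, and let Δ be the minimum of Δ_T over all subsets T of V(G). Let T be a subset of V(G) with Δ_T = Δ having minimum cardinality among all subsets attaining Δ. Then for any x₁ ∈ U \ T and x₂ ∈ T ∩ U we have γ(x₁) < γ(x₂); in particular, if γ(x) = γ(x′) for all x, x′ ∈ U, then either U ⊆ T or T ∩ U = ∅. -/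
/-
Adding a vertex `x ∉ T` to `T` adds exactly the edges from `x` to `N(x) \ T`, so
`Δ_{T ∪ {x}} = Δ_T + |N(x) \ T| - kγ(x)`. Minimality of `Δ_T` therefore gives `kγ(x₁) ≤ |N(x₁) \ T|`
for `x₁ ∉ T`, and minimality together with minimum cardinality gives `|N(x₂) \ (T - x₂)| < kγ(x₂)`
for `x₂ ∈ T`. If `x₁, x₂` are twins and `x₂ ∈ T`, then `N(x₁) \ T ⊆ N(x₂) \ (T - x₂)`, whence
`γ(x₁) < γ(x₂)`.
-/

namespace SimpleGraph

variable {V : Type*} [DecidableEq V] {G : SimpleGraph V}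

lemma neighborSet_diff_subset_of_twin {x₁ x₂ : V}
    (htwin : G.neighborSet x₁ \ {x₂} = G.neighborSet x₂ \ {x₁}) {T : Finset V} (hx₂ : x₂ ∈ T) :
    G.neighborSet x₁ \ ↑T ⊆ G.neighborSet x₂ \ ↑(T.erase x₂) := by
  rintro w ⟨hw, hwT⟩
  have hw' : w ∈ G.neighborSet x₁ \ {x₂} := ⟨hw, fun h => hwT (h ▸ hx₂)⟩
  rw [htwin] at hw'
  exact ⟨hw'.1, fun h => hwT (Finset.mem_of_mem_erase h)⟩

variable [Finite V] (G)

lemma ncard_incidentEdges_insert {x : V} {T : Finset V} (hx : x ∉ T) :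
    {e ∈ G.edgeSet | ∃ v ∈ insert x T, v ∈ e}.ncard
      = {e ∈ G.edgeSet | ∃ v ∈ T, v ∈ e}.ncard + (G.neighborSet x \ ↑T).ncard := by
  set A : Set (Sym2 V) := {e ∈ G.edgeSet | ∃ v ∈ T, v ∈ e}
  set S : Set (Sym2 V) := (fun w => s(x, w)) '' (G.neighborSet x \ ↑T)
  have hsplit : {e ∈ G.edgeSet | ∃ v ∈ insert x T, v ∈ e} = A ∪ S := by
    ext e
    induction e using Sym2.ind with
    | _ a b =>
      simp only [A, S, Set.mem_union, Set.mem_ofPred_eq, Set.mem_image, Set.mem_sdiff,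
        mem_neighborSet, Finset.mem_coe, mem_edgeSet, Finset.exists_mem_insert, Sym2.mem_iff,
        Sym2.eq_iff]
      constructor
      · rintro ⟨hab, h⟩
        by_cases haT : a ∈ T
        · exact Or.inl ⟨hab, a, haT, Or.inl rfl⟩
        by_cases hbT : b ∈ T
        · exact Or.inl ⟨hab, b, hbT, Or.inr rfl⟩
        rcases h with (rfl | rfl) | ⟨v, hvT, rfl | rfl⟩
        · exact Or.inr ⟨b, ⟨hab, hbT⟩, Or.inl ⟨rfl, rfl⟩⟩
        · exact Or.inr ⟨a, ⟨hab.symm, haT⟩, Or.inr ⟨rfl, rfl⟩⟩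
        · exact absurd hvT haT
        · exact absurd hvT hbT
      · rintro (⟨hab, h⟩ | ⟨w, ⟨hxw, -⟩, ⟨rfl, rfl⟩ | ⟨rfl, rfl⟩⟩)
        · exact ⟨hab, Or.inr h⟩
        · exact ⟨hxw, Or.inl (Or.inl rfl)⟩
        · exact ⟨hxw.symm, Or.inl (Or.inr rfl)⟩
  have hdisj : Disjoint A S := by
    rw [Set.disjoint_left]
    rintro _ ⟨-, v, hvT, hve⟩ ⟨w, ⟨-, hwT⟩, rfl⟩
    rcases Sym2.mem_iff.mp hve with rfl | rfl
    exacts [hx hvT, hwT hvT]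
  have hinj : Set.InjOn (fun w => s(x, w)) (G.neighborSet x \ ↑T) :=
    fun _ _ _ _ h => Sym2.congr_right.mp h
  rw [hsplit, Set.ncard_union_eq hdisj, hinj.ncard_image]

lemma starDelta_insert (k : ℕ) (γ : V → ℕ) {x : V} {T : Finset V} (hx : x ∉ T) :
    starDelta G k γ (insert x T)
      = starDelta G k γ T + (G.neighborSet x \ ↑T).ncard - k * γ x := by
  rw [starDelta, starDelta, G.ncard_incidentEdges_insert hx, Finset.sum_insert hx]
  push_cast
  ring

variable {G} {k : ℕ} {γ : V → ℕ} {T : Finset V}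

lemma mul_le_ncard_neighborSet_diff_of_forall_starDelta_le
    (hmin : ∀ T' : Finset V, starDelta G k γ T ≤ starDelta G k γ T') {x : V} (hx : x ∉ T) :
    k * γ x ≤ (G.neighborSet x \ ↑T).ncard := by
  have h := hmin (insert x T)
  rw [G.starDelta_insert k γ hx] at h
  omega

lemma ncard_neighborSet_diff_erase_lt_mul_of_forall_starDelta_le
    (hmin : ∀ T' : Finset V, starDelta G k γ T ≤ starDelta G k γ T')
    (hcard : ∀ T' : Finset V, starDelta G k γ T' = starDelta G k γ T → T.card ≤ T'.card)
    {x : V} (hx : x ∈ T) :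
    (G.neighborSet x \ ↑(T.erase x)).ncard < k * γ x := by
  have hΔ := G.starDelta_insert k γ (Finset.notMem_erase x T)
  rw [Finset.insert_erase hx] at hΔ
  have hle := hmin (T.erase x)
  by_contra! hge
  have hcard_le := hcard (T.erase x) (by omega)
  exact (Finset.card_erase_lt_of_mem hx).not_ge hcard_le

end SimpleGraph

theorem stmt6_general {V : Type*} [Fintype V] (k : ℕ)
    (G : SimpleGraph V) (U : Finset V)
    (hU : ∀ x ∈ U, ∀ y ∈ U, G.neighborSet x \ {y} = G.neighborSet y \ {x})
    (γ : V → ℕ)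
    (T : Finset V)
    (hmin : ∀ T' : Finset V, starDelta G k γ T ≤ starDelta G k γ T')
    (hcard : ∀ T' : Finset V, starDelta G k γ T' = starDelta G k γ T → T.card ≤ T'.card) :
    (∀ x₁ ∈ U, x₁ ∉ T → ∀ x₂ ∈ U, x₂ ∈ T → γ x₁ < γ x₂) ∧
    ((∀ x ∈ U, ∀ y ∈ U, γ x = γ y) → (U ⊆ T ∨ ∀ x ∈ U, x ∉ T)) := by
  classical
  have hlt : ∀ x₁ ∈ U, x₁ ∉ T → ∀ x₂ ∈ U, x₂ ∈ T → γ x₁ < γ x₂ := by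
    intro x₁ hx₁U hx₁T x₂ hx₂U hx₂T
    have hsub := SimpleGraph.neighborSet_diff_subset_of_twin (hU x₁ hx₁U x₂ hx₂U) hx₂T
    have := calc
      k * γ x₁ ≤ (G.neighborSet x₁ \ ↑T).ncard :=
        SimpleGraph.mul_le_ncard_neighborSet_diff_of_forall_starDelta_le hmin hx₁T
      _ ≤ (G.neighborSet x₂ \ ↑(T.erase x₂)).ncard := Set.ncard_le_ncard hsub
      _ < k * γ x₂ :=
        SimpleGraph.ncard_neighborSet_diff_erase_lt_mul_of_forall_starDelta_le hmin hcard hx₂T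
    exact Nat.lt_of_mul_lt_mul_left this
  refine ⟨hlt, fun hconst => or_iff_not_imp_left.mpr fun hUT x hxU hxT => ?_⟩
  obtain ⟨x₁, hx₁U, hx₁T⟩ := Finset.not_subset.mp hUT
  exact (hlt x₁ hx₁U hx₁T x hxU hxT).ne (hconst x₁ hx₁U x hxU)

/-- for a pairwise twin set `U` and a minimum-`Δ`, minimum-cardinality set `T`:
`γ x₁ < γ x₂` for `x₁ ∈ U \ T`, `x₂ ∈ T ∩ U`; in particular if `γ` is constant on `U` then
`U ⊆ T` or `T ∩ U = ∅`. -/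
theorem stmt6 {V : Type*} [Fintype V] (k : ℕ) (hk : 2 ≤ k)
    (G : SimpleGraph V) (U : Finset V)
    (hU : ∀ x ∈ U, ∀ y ∈ U, G.neighborSet x \ {y} = G.neighborSet y \ {x})
    (γ : V → ℕ) (hγ : k * ∑ x, γ x = G.edgeSet.ncard)
    (T : Finset V)
    (hmin : ∀ T' : Finset V, starDelta G k γ T ≤ starDelta G k γ T')
    (hcard : ∀ T' : Finset V, starDelta G k γ T' = starDelta G k γ T → T.card ≤ T'.card) :
    (∀ x₁ ∈ U, x₁ ∉ T → ∀ x₂ ∈ U, x₂ ∈ T → γ x₁ < γ x₂) ∧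
    ((∀ x ∈ U, ∀ y ∈ U, γ x = γ y) → (U ⊆ T ∨ ∀ x ∈ U, x ∉ T)) :=
  stmt6_general k G U hU γ T hmin hcard
end

section
/- Let k ≥ 2 and n ≥ 2 be integers such that k is odd and n ≡ 2 (mod 2k), and let L be a graph of order n with exactly one edge. Then there is a partial k-star decomposition of the complete graph K_n whose leave is L. -/
/-!
Write `n = 2mk + 2` and `N = 2mk + 1`, and realise `K_n` on `{∞} ∪ ℤ/N` (`none` and `some i`),
with leave `∞0`. Since `N` is odd, every edge of `K_N` is `{i, i + d}` with `1 ≤ d ≤ mk` for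
exactly one orientation; cutting the differences into the `m` blocks `{ck + 1, …, ck + k}` gives
at each centre `i` the stars `(i, i + block c)`, which together decompose `K_N`. The `2mk` edges
from `∞` to the nonzero residues form `2m` further stars `(∞, block c)`. Relabelling along a
bijection that carries `∞0` onto the edge of `L` proves the theorem.
-/

open Finset

lemma Sym2.map_surjective {α β : Type*} {f : α → β} (hf : Function.Surjective f) :
    Function.Surjective (Sym2.map f) := by
  intro e
  induction e using Sym2.ind with
  | _ x y =>
    obtain ⟨x, rfl⟩ := hf x
    obtain ⟨y, rfl⟩ := hf y
    exact ⟨s(x, y), rfl⟩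

section Relabel

variable {W V : Type*} [DecidableEq W] [DecidableEq V]

def mapStar (f : W → V) (p : W × Finset W) : V × Finset V := (f p.1, p.2.image f)

lemma starEdges_mapStar (f : W → V) (p : W × Finset W) :
    starEdges (mapStar f p).1 (mapStar f p).2 = (starEdges p.1 p.2).image (Sym2.map f) := by
  simp [mapStar, starEdges, image_image, Function.comp_def]

lemma IsPartialStarDecompOn.map {G : SimpleGraph W} {G' : SimpleGraph V} {k : ℕ}
    {D : Finset (W × Finset W)} (f : G ↪g G') (hD : IsPartialStarDecompOn G k D) :
    IsPartialStarDecompOn G' k (D.image (mapStar f)) := by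
  obtain ⟨hstar, hdisj⟩ := hD
  refine ⟨?_, ?_⟩
  · simp only [mem_image, forall_exists_index, and_imp]
    rintro _ p hp rfl
    obtain ⟨hcard, hadj⟩ := hstar p hp
    refine ⟨(card_image_of_injective _ f.injective).trans hcard, ?_⟩
    simp only [mapStar, mem_image, forall_exists_index, and_imp]
    rintro _ v hv rfl
    exact f.map_adj_iff.2 (hadj v hv)
  · simp only [mem_image, forall_exists_index, and_imp]
    rintro _ p hp rfl _ q hq rfl hpq
    rw [starEdges_mapStar, starEdges_mapStar]
    exact (disjoint_image (Sym2.map.injective f.injective)).2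
      (hdisj p hp q hq fun h => hpq (h ▸ rfl))

lemma edgeSet_leaveOf_image_mapStar {G : SimpleGraph W} {G' : SimpleGraph V}
    (f : G ↪g G') (hf : Function.Surjective f) (D : Finset (W × Finset W)) :
    (leaveOf G' (D.image (mapStar f))).edgeSet = Sym2.map f '' (leaveOf G D).edgeSet := by
  have hG : G'.edgeSet = Sym2.map f '' G.edgeSet := by
    rw [← f.preimage_edgeSet, Set.image_preimage_eq _ (Sym2.map_surjective hf)]
  have hS : (D.image (mapStar f)).biUnion (fun p => starEdges p.1 p.2) =
      (D.biUnion fun p => starEdges p.1 p.2).image (Sym2.map f) := by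
    simp only [image_biUnion, biUnion_image, starEdges_mapStar]
  rw [leaveOf, leaveOf, SimpleGraph.edgeSet_deleteEdges, SimpleGraph.edgeSet_deleteEdges, hS,
    coe_image, hG, Set.image_sdiff (Sym2.map.injective f.injective)]

end Relabel

lemma isStarIn_top_iff {V : Type*} {k : ℕ} {c : V} {Lf : Finset V} :
    IsStarIn (⊤ : SimpleGraph V) k c Lf ↔ Lf.card = k ∧ c ∉ Lf := by
  simp only [IsStarIn, SimpleGraph.top_adj]
  exact and_congr_right fun _ => ⟨fun h hc => h c hc rfl, fun h v hv hcv => h (hcv ▸ hv)⟩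

def block (k c : ℕ) : Finset ℕ := Ioc (c * k) (c * k + k)

lemma mem_block_iff {k c d : ℕ} (hk : 0 < k) : d ∈ block k c ↔ 0 < d ∧ (d - 1) / k = c := by
  rw [block, mem_Ioc, Nat.div_eq_iff hk]
  omega

lemma exists_mem_block {k d M : ℕ} (hk : 0 < k) (hd : 0 < d) (hdM : d ≤ M * k) :
    ∃ c < M, d ∈ block k c :=
  ⟨(d - 1) / k, by rw [Nat.div_lt_iff_lt_mul hk]; omega, (mem_block_iff hk).2 ⟨hd, rfl⟩⟩

lemma eq_of_mem_block_of_mem_block {k c c' d : ℕ} (hk : 0 < k) (hc : d ∈ block k c)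
    (hc' : d ∈ block k c') : c = c' :=
  ((mem_block_iff hk).1 hc).2.symm.trans ((mem_block_iff hk).1 hc').2

lemma pos_and_le_of_mem_block {k c d M : ℕ} (hd : d ∈ block k c) (hc : c < M) :
    0 < d ∧ d ≤ M * k := by
  have : (c + 1) * k ≤ M * k := Nat.mul_le_mul_right k hc
  rw [block, mem_Ioc] at hd
  rw [Nat.succ_mul] at this
  omega

lemma ZMod.natCast_inj_of_lt {N d d' : ℕ} (hd : d < N) (hd' : d' < N) :
    (d : ZMod N) = d' ↔ d = d' := by
  refine ⟨fun h => ?_, congrArg _⟩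
  simpa [ZMod.val_natCast_of_lt hd, ZMod.val_natCast_of_lt hd'] using congrArg ZMod.val h

lemma ZMod.natCast_ne_zero_of_pos_of_lt {N d : ℕ} (hd : 0 < d) (hdN : d < N) :
    (d : ZMod N) ≠ 0 := by
  simpa using (ZMod.natCast_inj_of_lt hdN (hd.trans hdN)).not.2 hd.ne'

lemma ZMod.val_le_or_neg_val_le {N M : ℕ} [NeZero N] (hN : N ≤ 2 * M + 1) {a : ZMod N}
    (ha : a ≠ 0) :
    (0 < a.val ∧ a.val ≤ M) ∨ (0 < (-a).val ∧ (-a).val ≤ M) := by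
  have := a.val_lt
  have := (ZMod.val_ne_zero a).2 ha
  rw [ZMod.neg_val, if_neg ha]
  omega

lemma ZMod.eq_and_eq_of_sym2_add_eq {N M d d' : ℕ} (hN : 2 * M < N) (hd : 0 < d ∧ d ≤ M)
    (hd' : 0 < d' ∧ d' ≤ M) {i i' : ZMod N} (h : s(i, i + d) = s(i', i' + d')) :
    i = i' ∧ d = d' := by
  rcases Sym2.eq_iff.1 h with ⟨rfl, h⟩ | ⟨rfl, h⟩
  · exact ⟨rfl, (ZMod.natCast_inj_of_lt (by omega) (by omega)).1 (add_left_cancel h)⟩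
  · refine absurd ?_
      (ZMod.natCast_ne_zero_of_pos_of_lt (N := N) (d := d + d') (by omega) (by omega))
    rw [Nat.cast_add]
    linear_combination h

section Construction

variable {N k m : ℕ}

def blockLeaves (k : ℕ) (i : ZMod N) (c : ℕ) : Finset (Option (ZMod N)) :=
  (block k c).image fun d : ℕ => some (i + d)

lemma mem_starEdges_blockLeaves {c : ℕ} {x : Option (ZMod N)} {i : ZMod N} {e} :
    e ∈ starEdges x (blockLeaves k i c) ↔ ∃ d ∈ block k c, e = s(x, some (i + d)) := by
  simp [starEdges, blockLeaves, eq_comm]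

lemma card_blockLeaves {c : ℕ} (i : ZMod N) (hc : c * k + k < N) :
    (blockLeaves k i c).card = k := by
  rw [blockLeaves, card_image_of_injOn, block, Nat.card_Ioc, Nat.add_sub_cancel_left]
  intro d hd d' hd' h
  simp only [coe_Ioc, Set.mem_Ioc, block, Option.some.injEq, add_right_inj] at hd hd' h
  exact (ZMod.natCast_inj_of_lt (by omega) (by omega)).1 h

lemma some_notMem_blockLeaves {c : ℕ} (i : ZMod N) (hc : c * k + k < N) :
    some i ∉ blockLeaves k i c := by
  simp only [blockLeaves, block, mem_image, mem_Ioc, Option.some.injEq, add_eq_left, not_exists,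
    not_and]
  exact fun d hd => ZMod.natCast_ne_zero_of_pos_of_lt (by omega) (by omega)

def apexStars (k m : ℕ) : Finset (Option (ZMod N) × Finset (Option (ZMod N))) :=
  (range (2 * m)).image fun c => (none, blockLeaves k 0 c)

lemma mem_apexStars {p : Option (ZMod N) × Finset (Option (ZMod N))} :
    p ∈ apexStars k m ↔ ∃ c < 2 * m, (none, blockLeaves k 0 c) = p := by
  simp [apexStars]

variable [NeZero N]

def cyclicStars (k m : ℕ) : Finset (Option (ZMod N) × Finset (Option (ZMod N))) :=
  (univ ×ˢ range m).image fun p => (some p.1, blockLeaves k p.1 p.2)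

lemma mem_cyclicStars {p : Option (ZMod N) × Finset (Option (ZMod N))} :
    p ∈ cyclicStars k m ↔ ∃ i, ∃ c < m, (some i, blockLeaves k i c) = p := by
  simp [cyclicStars]

def cyclicApexStars (k m : ℕ) : Finset (Option (ZMod N) × Finset (Option (ZMod N))) :=
  cyclicStars k m ∪ apexStars k m

lemma isStarIn_top_of_mem_cyclicApexStars (hN : 2 * m * k < N)
    {p : Option (ZMod N) × Finset (Option (ZMod N))} (hp : p ∈ cyclicApexStars k m) :
    IsStarIn ⊤ k p.1 p.2 := by
  have hlt {c : ℕ} (hc : c < 2 * m) : c * k + k < N := by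
    have : (c + 1) * k ≤ 2 * m * k := Nat.mul_le_mul_right k hc
    rw [Nat.succ_mul] at this
    omega
  rw [isStarIn_top_iff]
  rcases mem_union.1 hp with hp | hp
  · obtain ⟨i, c, hc, rfl⟩ := mem_cyclicStars.1 hp
    exact ⟨card_blockLeaves i (hlt (by omega)), some_notMem_blockLeaves i (hlt (by omega))⟩
  · obtain ⟨c, hc, rfl⟩ := mem_apexStars.1 hp
    exact ⟨card_blockLeaves 0 (hlt hc), by simp [blockLeaves]⟩

lemma eq_of_mem_starEdges_of_mem_starEdges (hk : 0 < k) (hN : 2 * m * k < N)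
    {p q : Option (ZMod N) × Finset (Option (ZMod N))}
    (hp : p ∈ cyclicApexStars k m) (hq : q ∈ cyclicApexStars k m)
    {e : Sym2 (Option (ZMod N))} (hep : e ∈ starEdges p.1 p.2) (heq : e ∈ starEdges q.1 q.2) :
    p = q := by
  rcases mem_union.1 hp with hp | hp <;> rcases mem_union.1 hq with hq | hq
  · obtain ⟨i, c, hc, rfl⟩ := mem_cyclicStars.1 hp
    obtain ⟨i', c', hc', rfl⟩ := mem_cyclicStars.1 hq
    obtain ⟨d, hd, rfl⟩ := mem_starEdges_blockLeaves.1 hep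
    obtain ⟨d', hd', he⟩ := mem_starEdges_blockLeaves.1 heq
    obtain ⟨rfl, rfl⟩ := ZMod.eq_and_eq_of_sym2_add_eq (N := N) (M := m * k)
      (by rwa [← mul_assoc]) (pos_and_le_of_mem_block hd hc) (pos_and_le_of_mem_block hd' hc')
      (Sym2.map.injective (Option.some_injective _) (by simpa using he))
    rw [eq_of_mem_block_of_mem_block hk hd hd']
  · obtain ⟨i, c, -, rfl⟩ := mem_cyclicStars.1 hp
    obtain ⟨c', -, rfl⟩ := mem_apexStars.1 hq
    obtain ⟨d, -, rfl⟩ := mem_starEdges_blockLeaves.1 hep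
    obtain ⟨d', -, he⟩ := mem_starEdges_blockLeaves.1 heq
    simp at he
  · obtain ⟨c, -, rfl⟩ := mem_apexStars.1 hp
    obtain ⟨i', c', -, rfl⟩ := mem_cyclicStars.1 hq
    obtain ⟨d, -, rfl⟩ := mem_starEdges_blockLeaves.1 hep
    obtain ⟨d', -, he⟩ := mem_starEdges_blockLeaves.1 heq
    simp at he
  · obtain ⟨c, hc, rfl⟩ := mem_apexStars.1 hp
    obtain ⟨c', hc', rfl⟩ := mem_apexStars.1 hq
    obtain ⟨d, hd, rfl⟩ := mem_starEdges_blockLeaves.1 hep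
    obtain ⟨d', hd', he⟩ := mem_starEdges_blockLeaves.1 heq
    have hdN := pos_and_le_of_mem_block hd hc
    have hdN' := pos_and_le_of_mem_block hd' hc'
    obtain rfl : d = d' :=
      (ZMod.natCast_inj_of_lt (N := N) (by omega) (by omega)).1 (by simpa using he)
    rw [eq_of_mem_block_of_mem_block hk hd hd']

lemma exists_mem_cyclicStars_mem_starEdges (hk : 0 < k) (hN : N ≤ 2 * m * k + 1) {i j : ZMod N}
    (hij : i ≠ j) : ∃ p ∈ cyclicStars k m, s(some i, some j) ∈ starEdges p.1 p.2 := by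
  have hcover {i j : ZMod N} (h0 : 0 < (j - i).val) (hle : (j - i).val ≤ m * k) :
      ∃ p ∈ cyclicStars k m, s(some i, some j) ∈ starEdges p.1 p.2 := by
    obtain ⟨c, hc, hd⟩ := exists_mem_block hk h0 hle
    exact ⟨_, mem_cyclicStars.2 ⟨i, c, hc, rfl⟩,
      mem_starEdges_blockLeaves.2 ⟨_, hd, by simp⟩⟩
  rcases ZMod.val_le_or_neg_val_le (M := m * k) (by rwa [← mul_assoc])
    (sub_ne_zero.2 hij.symm) with ⟨h0, hle⟩ | ⟨h0, hle⟩
  · exact hcover h0 hle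
  · rw [neg_sub] at h0 hle
    rw [Sym2.eq_swap]
    exact hcover h0 hle

lemma exists_mem_apexStars_mem_starEdges (hk : 0 < k) (hN : N ≤ 2 * m * k + 1) {j : ZMod N}
    (hj : j ≠ 0) : ∃ p ∈ apexStars k m, s(none, some j) ∈ starEdges p.1 p.2 := by
  have := j.val_lt
  obtain ⟨c, hc, hd⟩ := exists_mem_block (M := 2 * m) hk ((ZMod.val_pos).2 hj) (by omega)
  exact ⟨_, mem_apexStars.2 ⟨c, hc, rfl⟩, mem_starEdges_blockLeaves.2 ⟨_, hd, by simp⟩⟩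

lemma isPartialStarDecompOn_cyclicApexStars (hk : 0 < k) (hN : 2 * m * k < N) :
    IsPartialStarDecompOn ⊤ k (cyclicApexStars (N := N) k m) :=
  ⟨fun _ hp => isStarIn_top_of_mem_cyclicApexStars hN hp,
    fun _ hp _ hq hpq => disjoint_left.2 fun _ hep heq =>
      hpq (eq_of_mem_starEdges_of_mem_starEdges hk hN hp hq hep heq)⟩

lemma none_some_zero_notMem_starEdges (hN : 2 * m * k < N)
    {p : Option (ZMod N) × Finset (Option (ZMod N))} (hp : p ∈ cyclicApexStars k m) :
    s(none, some 0) ∉ starEdges p.1 p.2 := by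
  rcases mem_union.1 hp with hp | hp
  · obtain ⟨i, c, -, rfl⟩ := mem_cyclicStars.1 hp
    simp [mem_starEdges_blockLeaves]
  · obtain ⟨c, hc, rfl⟩ := mem_apexStars.1 hp
    rw [mem_starEdges_blockLeaves]
    rintro ⟨d, hd, he⟩
    have := pos_and_le_of_mem_block hd hc
    exact ZMod.natCast_ne_zero_of_pos_of_lt (N := N) (d := d) (by omega) (by omega)
      (by simpa using he.symm)

lemma edgeSet_leaveOf_cyclicApexStars (hk : 0 < k) (hN : N = 2 * m * k + 1) :
    (leaveOf ⊤ (cyclicApexStars (N := N) k m)).edgeSet = {s(none, some 0)} := by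
  ext e
  simp only [leaveOf, SimpleGraph.edgeSet_deleteEdges, Set.mem_sdiff, coe_biUnion,
    Set.mem_iUnion, mem_coe, Set.mem_singleton_iff, exists_prop]
  refine ⟨fun ⟨he, hnot⟩ => ?_, ?_⟩
  · by_contra hne
    refine hnot ?_
    induction e using Sym2.ind with | _ x y => ?_
    rcases x with _ | i <;> rcases y with _ | j
    · simp at he
    · obtain ⟨p, hp, hjp⟩ := exists_mem_apexStars_mem_starEdges hk hN.le (j := j)
        (by rintro rfl; simp at hne)
      exact ⟨p, mem_union_right _ hp, hjp⟩
    · obtain ⟨p, hp, hip⟩ := exists_mem_apexStars_mem_starEdges hk hN.le (j := i)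
        (by rintro rfl; simp [Sym2.eq_swap] at hne)
      exact ⟨p, mem_union_right _ hp, Sym2.eq_swap ▸ hip⟩
    · obtain ⟨p, hp, hijp⟩ := exists_mem_cyclicStars_mem_starEdges hk hN.le (i := i) (j := j)
        (by simpa using he)
      exact ⟨p, mem_union_left _ hp, hijp⟩
  · rintro rfl
    exact ⟨by simp, fun ⟨p, hp, he⟩ => none_some_zero_notMem_starEdges (by omega) hp he⟩

end Construction

lemma SimpleGraph.exists_edgeSet_eq_singleton_of_ncard_eq_one {V : Type*} {L : SimpleGraph V}
    (hL : L.edgeSet.ncard = 1) : ∃ a b, a ≠ b ∧ L.edgeSet = {s(a, b)} := by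
  obtain ⟨e, he⟩ := Set.ncard_eq_one.1 hL
  induction e using Sym2.ind with
  | _ a b => exact ⟨a, b, (L.mem_edgeSet.1 (he ▸ rfl : s(a, b) ∈ L.edgeSet)).ne, he⟩

lemma Fintype.exists_equiv_apply_eq_and_apply_eq {α β : Type*} [Fintype α] [Fintype β]
    [DecidableEq α] [DecidableEq β] (h : Fintype.card α = Fintype.card β) {a₁ a₂ : α} {b₁ b₂ : β}
    (ha : a₁ ≠ a₂) (hb : b₁ ≠ b₂) : ∃ f : α ≃ β, f a₁ = b₁ ∧ f a₂ = b₂ := by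
  let f₁ := (Fintype.equivOfCardEq h).trans (Equiv.swap (Fintype.equivOfCardEq h a₁) b₁)
  have hf₁ : f₁ a₁ = b₁ := by simp [f₁]
  have hne : b₁ ≠ f₁ a₂ := hf₁ ▸ f₁.injective.ne ha
  exact ⟨f₁.trans (Equiv.swap (f₁ a₂) b₂), by simp [hf₁, Equiv.swap_apply_of_ne_of_ne hne hb],
    by simp⟩

theorem stmt7_general {V : Type*} [Fintype V] [DecidableEq V] (k n : ℕ) (hk : 2 ≤ k)
    (hmod : n % (2 * k) = 2)
    (hV : Fintype.card V = n) (L : SimpleGraph V) (hL : L.edgeSet.ncard = 1) :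
    ∃ D, IsPartialStarDecompOn (⊤ : SimpleGraph V) k D ∧ leaveOf (⊤ : SimpleGraph V) D = L := by
  obtain ⟨a, b, hab, hLab⟩ := L.exists_edgeSet_eq_singleton_of_ncard_eq_one hL
  obtain ⟨m, hn⟩ : ∃ m, n = 2 * m * k + 1 + 1 := by
    have := Nat.div_add_mod n (2 * k)
    rw [hmod, mul_right_comm] at this
    exact ⟨_, this.symm⟩
  obtain ⟨f, hfa, hfb⟩ := Fintype.exists_equiv_apply_eq_and_apply_eq
    (α := Option (ZMod (2 * m * k + 1))) (by simp [hV, hn]) (Option.some_ne_none 0).symm hab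
  let F : (⊤ : SimpleGraph _) ≃g (⊤ : SimpleGraph V) := .completeGraph f
  have hD := isPartialStarDecompOn_cyclicApexStars (N := 2 * m * k + 1) (k := k) (m := m)
    (by omega) (by omega)
  refine ⟨_, hD.map F.toEmbedding, ?_⟩
  rw [← SimpleGraph.edgeSet_inj, edgeSet_leaveOf_image_mapStar F.toEmbedding F.surjective,
    edgeSet_leaveOf_cyclicApexStars (by omega) rfl, hLab, Set.image_singleton, Sym2.map_mk]
  exact congrArg _ (congrArg₂ _ hfa hfb)

/-- for odd `k ≥ 2`, `n ≡ 2 (mod 2k)`, `n ≥ 2`, and `L` a graph of order `n`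
with exactly one edge, there is a partial `k`-star decomposition of `K_n` with leave `L`. -/
theorem stmt7 {V : Type*} [Fintype V] [DecidableEq V] (k n : ℕ) (hk : 2 ≤ k) (hn : 2 ≤ n)
    (hkodd : Odd k) (hmod : n % (2 * k) = 2)
    (hV : Fintype.card V = n) (L : SimpleGraph V) (hL : L.edgeSet.ncard = 1) :
    ∃ D, IsPartialStarDecompOn (⊤ : SimpleGraph V) k D ∧ leaveOf (⊤ : SimpleGraph V) D = L :=
  stmt7_general k n hk hmod hV L hL
end

section
/- Let k ≥ 2 and n ≥ 2 be integers such that k is odd and n ≡ 2 (mod 2k), and let L be a graph of order n with exactly one edge. Then |E(L ∨ K_{k−1})| ≡ 0 (mod k), yet there is no k-star decomposition of the join L ∨ K_{k−1}. -/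
/-!
Fix a vertex `x` of `K_{k-1}`. Its degree `n + k - 2` is a multiple of `k`; a star centred at `x`
uses `k` edges at `x` and any other star at most one, so the number of stars having `x` as a leaf
is a multiple of `k`. These stars have pairwise distinct centres. The edge `uv` of `L` lies in a
star centred at, say, `u`; as `u` has degree exactly `k`, that star contains `x`. Every other vertex
of `L` has degree less than `k` except `v`, and a star centred at `v` would contain `uv` again. So
the centres of the stars with leaf `x` lie among `u` and the `k - 2` other vertices of `K_{k-1}`,
and their number is strictly between `0` and `k`. The divisibility of the edge count is a direct
count using that `k` is odd.
-/

open Finset SimpleGraph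

section StarDecomposition

variable {V : Type*} {G : SimpleGraph V} {k : ℕ} {c : V} {Lf : Finset V}

lemma IsStarIn.center_notMem (h : IsStarIn G k c Lf) : c ∉ Lf :=
  fun hc => (h.2 c hc).ne rfl

lemma IsStarIn.subset_neighborFinset [Fintype (G.neighborSet c)] (h : IsStarIn G k c Lf) :
    Lf ⊆ G.neighborFinset c :=
  fun v hv => (G.mem_neighborFinset c v).2 (h.2 v hv)

lemma IsStarIn.le_degree [Fintype (G.neighborSet c)] (h : IsStarIn G k c Lf) :
    k ≤ G.degree c := by
  rw [← h.1, ← card_neighborFinset_eq_degree]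
  exact card_le_card h.subset_neighborFinset

lemma IsStarIn.eq_neighborFinset_of_degree_eq [Fintype (G.neighborSet c)]
    (h : IsStarIn G k c Lf) (hc : G.degree c = k) : Lf = G.neighborFinset c :=
  eq_of_subset_of_card_le h.subset_neighborFinset (by rw [card_neighborFinset_eq_degree, hc, h.1])

lemma IsStarIn.starEdges_subset_edgeFinset [DecidableEq V] [Fintype G.edgeSet]
    (h : IsStarIn G k c Lf) : starEdges c Lf ⊆ G.edgeFinset := by
  intro e he
  obtain ⟨v, hv, rfl⟩ := mem_image.mp he
  exact G.mem_edgeFinset.mpr (h.2 v hv)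

lemma mem_starEdges_of_mem [DecidableEq V] {v : V} (hv : v ∈ Lf) : s(c, v) ∈ starEdges c Lf :=
  mem_image_of_mem _ hv

lemma IsStarIn.card_filter_mem_starEdges [DecidableEq V] (h : IsStarIn G k c Lf) (x : V) :
    #{e ∈ starEdges c Lf | x ∈ e} = (if c = x then k else 0) + if x ∈ Lf then 1 else 0 := by
  have hinj : Function.Injective fun v => s(c, v) := fun _ _ hvw => Sym2.congr_right.mp hvw
  rw [starEdges, filter_image, card_image_of_injective _ hinj]
  simp only [Sym2.mem_iff]
  by_cases hc : c = x
  · subst hc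
    rw [filter_true_of_mem fun _ _ => Or.inl rfl, h.1, if_pos rfl, if_neg h.center_notMem,
      add_zero]
  · rw [filter_congr fun v _ => or_iff_right (Ne.symm hc), filter_eq, if_neg hc]
    split_ifs <;> simp

end StarDecomposition

section Decomposition

variable {V : Type*} [DecidableEq V] {G : SimpleGraph V} {k : ℕ} {D : Finset (V × Finset V)}

lemma IsPartialStarDecompOn.injOn_fst_filter_mem (hD : IsPartialStarDecompOn G k D) (x : V) :
    Set.InjOn Prod.fst (↑{p ∈ D | x ∈ p.2} : Set (V × Finset V)) := by
  intro p hp q hq hpq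
  rw [coe_filter] at hp hq
  by_contra hne
  refine disjoint_left.mp (hD.2 p hp.1 q hq.1 hne) (mem_starEdges_of_mem hp.2) ?_
  rw [hpq]
  exact mem_starEdges_of_mem hq.2

lemma IsPartialStarDecompOn.not_adj_of_degree_eq [Fintype V] [DecidableRel G.Adj]
    (hD : IsPartialStarDecompOn G k D) {p q : V × Finset V} (hp : p ∈ D) (hq : q ∈ D)
    (hpk : G.degree p.1 = k) (hqk : G.degree q.1 = k) : ¬ G.Adj p.1 q.1 := by
  intro hadj
  have hpq : p ≠ q := fun h => hadj.ne (congrArg Prod.fst h)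
  have hq_leaf : q.1 ∈ p.2 := by
    rw [(hD.1 p hp).eq_neighborFinset_of_degree_eq hpk]; simpa using hadj
  have hp_leaf : p.1 ∈ q.2 := by
    rw [(hD.1 q hq).eq_neighborFinset_of_degree_eq hqk]; simpa using hadj.symm
  refine disjoint_left.mp (hD.2 p hp q hq hpq) (mem_starEdges_of_mem hq_leaf) ?_
  rw [Sym2.eq_swap]
  exact mem_starEdges_of_mem hp_leaf

lemma IsStarDecompOn.exists_mem_of_adj (hD : IsStarDecompOn G k D) {a b : V} (h : G.Adj a b) :
    ∃ p ∈ D, p.1 = a ∧ b ∈ p.2 ∨ p.1 = b ∧ a ∈ p.2 := by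
  obtain ⟨p, hp, he⟩ := hD.2 s(a, b) h
  obtain ⟨w, hw, hwe⟩ := mem_image.mp he
  refine ⟨p, hp, ?_⟩
  rcases Sym2.eq_iff.mp hwe with ⟨rfl, rfl⟩ | ⟨rfl, rfl⟩
  · exact Or.inl ⟨rfl, hw⟩
  · exact Or.inr ⟨rfl, hw⟩

lemma IsStarDecompOn.edgeFinset_eq_biUnion [Fintype G.edgeSet] (hD : IsStarDecompOn G k D) :
    G.edgeFinset = D.biUnion fun p => starEdges p.1 p.2 := by
  refine Subset.antisymm (fun e he => mem_biUnion.mpr (hD.2 e (mem_edgeFinset.mp he))) ?_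
  exact biUnion_subset.mpr fun p hp => (hD.1.1 p hp).starEdges_subset_edgeFinset

lemma IsStarDecompOn.degree_eq [Fintype V] [DecidableRel G.Adj] (hD : IsStarDecompOn G k D)
    (x : V) : G.degree x = k * #{p ∈ D | p.1 = x} + #{p ∈ D | x ∈ p.2} := by
  rw [← card_incidenceFinset_eq_degree, incidenceFinset_eq_filter, hD.edgeFinset_eq_biUnion,
    filter_biUnion, card_biUnion fun p hp q hq hpq =>
      disjoint_filter_filter (hD.1.2 p hp q hq hpq)]
  rw [sum_congr rfl fun p hp => (hD.1.1 p hp).card_filter_mem_starEdges x, sum_add_distrib,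
    card_filter, card_filter, mul_sum]
  simp only [mul_ite, mul_one, mul_zero]

lemma IsStarDecompOn.dvd_card_filter_mem [Fintype V] [DecidableRel G.Adj]
    (hD : IsStarDecompOn G k D) {x : V} (hx : k ∣ G.degree x) : k ∣ #{p ∈ D | x ∈ p.2} := by
  rw [hD.degree_eq x] at hx
  exact (Nat.dvd_add_right (dvd_mul_right _ _)).mp hx

end Decomposition

section Join

variable {V : Type*} {L : SimpleGraph V} {s : ℕ}

lemma joinK_adj_inl_inl {a b : V} : (joinK L s).Adj (Sum.inl a) (Sum.inl b) ↔ L.Adj a b :=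
  ⟨fun h => h.2 a b rfl rfl,
    fun h => ⟨by simpa using h.ne, by rintro _ _ ⟨⟩ ⟨⟩; exact h⟩⟩

lemma joinK_adj_inl_inr {a : V} {i : Fin s} : (joinK L s).Adj (Sum.inl a) (Sum.inr i) :=
  ⟨by simp, fun _ _ _ h => by simp at h⟩

lemma joinK_adj_inr {i : Fin s} {y : V ⊕ Fin s} :
    (joinK L s).Adj (Sum.inr i) y ↔ Sum.inr i ≠ y :=
  ⟨fun h => h.ne, fun h => ⟨h, fun _ _ h' => by simp at h'⟩⟩

variable [Fintype V] [DecidableRel (joinK L s).Adj]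

lemma degree_joinK_inr [DecidableEq V] (i : Fin s) :
    (joinK L s).degree (Sum.inr i) = Fintype.card V + s - 1 := by
  have : (joinK L s).neighborFinset (Sum.inr i) = univ.erase (Sum.inr i) := by
    ext y
    simp [joinK_adj_inr, eq_comm]
  rw [← card_neighborFinset_eq_degree, this, card_erase_of_mem (mem_univ _), card_univ]
  simp

variable [DecidableRel L.Adj]

lemma degree_joinK_inl (a : V) : (joinK L s).degree (Sum.inl a) = L.degree a + s := by
  have : (joinK L s).neighborFinset (Sum.inl a) = (L.neighborFinset a).disjSum univ := by
    ext y
    cases y <;> simp [joinK_adj_inl_inl, joinK_adj_inl_inr]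
  rw [← card_neighborFinset_eq_degree, this, card_disjSum, card_neighborFinset_eq_degree]
  simp

lemma two_mul_card_edgeFinset_joinK [DecidableEq V] :
    2 * #(joinK L s).edgeFinset
      = 2 * #L.edgeFinset + Fintype.card V * s + s * (Fintype.card V + s - 1) := by
  rw [← sum_degrees_eq_twice_card_edges, Fintype.sum_sum_type]
  simp only [degree_joinK_inl, degree_joinK_inr, sum_add_distrib, sum_degrees_eq_twice_card_edges]
  simp [mul_comm]

end Join

section SingleEdge

variable {V : Type*} [Fintype V] {L : SimpleGraph V} [DecidableRel L.Adj] {u v : V}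

lemma degree_eq_one_of_edgeSet_eq_singleton (hL : L.edgeSet = {s(u, v)}) : L.degree u = 1 := by
  have huv : L.Adj u v := by rw [← mem_edgeSet, hL]; rfl
  rw [← card_neighborFinset_eq_degree, card_eq_one]
  refine ⟨v, eq_singleton_iff_unique_mem.mpr ⟨by simpa using huv, fun w hw => ?_⟩⟩
  have : s(u, w) ∈ L.edgeSet := (mem_neighborFinset L u w).mp hw
  rw [hL, Set.mem_singleton_iff, Sym2.congr_right] at this
  exact this

lemma eq_or_eq_of_degree_pos_of_edgeSet_eq_singleton (hL : L.edgeSet = {s(u, v)}) {w : V}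
    (hw : 0 < L.degree w) : w = u ∨ w = v := by
  obtain ⟨b, hb⟩ := L.degree_pos_iff_exists_adj w |>.mp hw
  have : s(w, b) ∈ L.edgeSet := hb
  rw [hL, Set.mem_singleton_iff] at this
  exact Sym2.mem_iff.mp (this ▸ Sym2.mem_mk_left w b)

variable {k : ℕ} [DecidableRel (joinK L (k - 1)).Adj]

lemma degree_joinK_inl_of_edgeSet_eq_singleton (hk : 1 ≤ k) (hL : L.edgeSet = {s(u, v)}) :
    (joinK L (k - 1)).degree (Sum.inl u) = k := by
  rw [degree_joinK_inl, degree_eq_one_of_edgeSet_eq_singleton hL]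
  omega

lemma eq_of_fst_eq_inl_of_isPartialStarDecompOn_joinK [DecidableEq V] (hk : 1 ≤ k)
    (hL : L.edgeSet = {s(u, v)}) {D : Finset ((V ⊕ Fin (k - 1)) × Finset (V ⊕ Fin (k - 1)))}
    (hD : IsPartialStarDecompOn (joinK L (k - 1)) k D)
    {p q : (V ⊕ Fin (k - 1)) × Finset (V ⊕ Fin (k - 1))} (hq : q ∈ D) (hqu : q.1 = Sum.inl u)
    (hp : p ∈ D) {w : V} (hpw : p.1 = Sum.inl w) :
    w = u := by
  have hdeg := (hD.1 p hp).le_degree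
  rw [hpw, degree_joinK_inl] at hdeg
  rcases eq_or_eq_of_degree_pos_of_edgeSet_eq_singleton hL (w := w) (by omega) with hwu | hwv
  · exact hwu
  · have hL' : L.edgeSet = {s(v, u)} := by rw [hL, Sym2.eq_swap]
    have hadj : (joinK L (k - 1)).Adj q.1 p.1 := by
      rw [hqu, hpw, hwv, joinK_adj_inl_inl, ← mem_edgeSet, hL]; rfl
    refine absurd hadj (hD.not_adj_of_degree_eq hq hp ?_ ?_)
    · rw [hqu]; exact degree_joinK_inl_of_edgeSet_eq_singleton hk hL
    · rw [hpw, hwv]; exact degree_joinK_inl_of_edgeSet_eq_singleton hk hL'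

end SingleEdge

theorem dvd_card_edgeFinset_joinK {V : Type*} [Fintype V] [DecidableEq V] {L : SimpleGraph V}
    [DecidableRel L.Adj] {k j : ℕ} [DecidableRel (joinK L (k - 1)).Adj] (hk : Odd k)
    (hV : Fintype.card V = k * j + 2) (hL : #L.edgeFinset = 1) :
    k ∣ #(joinK L (k - 1)).edgeFinset := by
  obtain ⟨t, rfl⟩ := hk
  have h := two_mul_card_edgeFinset_joinK (L := L) (s := 2 * t + 1 - 1)
  generalize #(joinK L (2 * t + 1 - 1)).edgeFinset = E at h ⊢
  rw [hV, hL, Nat.add_sub_cancel,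
    show (2 * t + 1) * j + 2 + 2 * t - 1 = (2 * t + 1) * j + 2 * t + 1 by omega] at h
  exact ⟨1 + 2 * t * j + t, by linarith⟩

theorem not_exists_isStarDecompOn_joinK {V : Type*} [Fintype V] [DecidableEq V]
    {L : SimpleGraph V} {k j : ℕ} {u v : V} (hk : 2 ≤ k) (hV : Fintype.card V = k * j + 2)
    (hL : L.edgeSet = {s(u, v)}) : ¬ ∃ D, IsStarDecompOn (joinK L (k - 1)) k D := by
  classical
  rintro ⟨D, hD⟩
  wlog hq : ∃ q ∈ D, q.1 = Sum.inl u generalizing u v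
  · have huv : (joinK L (k - 1)).Adj (Sum.inl u) (Sum.inl v) := by
      rw [joinK_adj_inl_inl, ← mem_edgeSet, hL]; rfl
    obtain ⟨q, hqD, ⟨hqu, -⟩ | ⟨hqv, -⟩⟩ := hD.exists_mem_of_adj huv
    · exact hq ⟨q, hqD, hqu⟩
    · exact this (by rw [hL, Sym2.eq_swap]) ⟨q, hqD, hqv⟩
  obtain ⟨q, hqD, hqu⟩ := hq
  set i₀ : Fin (k - 1) := ⟨0, by omega⟩
  set T := {p ∈ D | Sum.inr i₀ ∈ p.2}
  have hdvd : k ∣ #T := by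
    refine hD.dvd_card_filter_mem ⟨j + 1, ?_⟩
    rw [degree_joinK_inr, hV, mul_add_one]
    omega
  have hqT : q ∈ T := by
    have hdeg : (joinK L (k - 1)).degree q.1 = k := by
      rw [hqu]; exact degree_joinK_inl_of_edgeSet_eq_singleton (by omega) hL
    rw [mem_filter, (hD.1.1 q hqD).eq_neighborFinset_of_degree_eq hdeg, hqu]
    exact ⟨hqD, (mem_neighborFinset _ _ _).mpr joinK_adj_inl_inr⟩
  have hcentres : T.image Prod.fst ⊆ insert (Sum.inl u) ((univ.erase i₀).image Sum.inr) := by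
    intro c hc
    obtain ⟨p, hpT, rfl⟩ := mem_image.mp hc
    obtain ⟨hpD, hp₀⟩ := mem_filter.mp hpT
    rcases hp : p.1 with w | i
    · rw [eq_of_fst_eq_inl_of_isPartialStarDecompOn_joinK (by omega) hL hD.1 hqD hqu hpD hp]
      exact mem_insert_self _ _
    · have hi : i ≠ i₀ := by
        rintro rfl
        exact (hD.1.1 p hpD).center_notMem (hp ▸ hp₀)
      exact mem_insert_of_mem (mem_image_of_mem _ (mem_erase.mpr ⟨hi, mem_univ _⟩))
  have hcard : #T ≤ k - 1 :=
    calc #T = #(T.image Prod.fst) := (card_image_of_injOn (hD.1.injOn_fst_filter_mem _)).symm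
      _ ≤ #((univ.erase i₀).image Sum.inr) + 1 :=
        (card_le_card hcentres).trans (card_insert_le _ _)
      _ = k - 1 := by
        rw [card_image_of_injective _ Sum.inr_injective, card_erase_of_mem (mem_univ _),
          card_univ, Fintype.card_fin]
        omega
  have := Nat.le_of_dvd (card_pos.mpr ⟨q, hqT⟩) hdvd
  omega

theorem stmt8_general {V : Type*} [Fintype V] [DecidableEq V] (k n : ℕ) (hk : 2 ≤ k)
    (hkodd : Odd k) (hmod : n % (2 * k) = 2)
    (hV : Fintype.card V = n) (L : SimpleGraph V) (hL : L.edgeSet.ncard = 1) :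
    k ∣ (joinK L (k - 1)).edgeSet.ncard ∧
    ¬ ∃ D, IsStarDecompOn (joinK L (k - 1)) k D := by
  classical
  have hn : Fintype.card V = k * (2 * (n / (2 * k))) + 2 := by
    rw [hV, ← mul_assoc, mul_comm k 2]
    have := Nat.div_add_mod n (2 * k)
    omega
  constructor
  · rw [← coe_edgeFinset, Set.ncard_coe_finset]
    exact dvd_card_edgeFinset_joinK hkodd hn (by rwa [← Set.ncard_coe_finset, coe_edgeFinset])
  · obtain ⟨u, v, huv⟩ := Sym2.exists.mp (Set.ncard_eq_one.mp hL)
    exact not_exists_isStarDecompOn_joinK hk hn huv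

/-- for odd `k ≥ 2`, `n ≡ 2 (mod 2k)`, `n ≥ 2`, and `L` of order `n` with
exactly one edge, `k` divides `|E(L ∨ K_{k-1})|` yet `L ∨ K_{k-1}` has no `k`-star
decomposition. -/
theorem stmt8 {V : Type*} [Fintype V] [DecidableEq V] (k n : ℕ) (hk : 2 ≤ k) (hn : 2 ≤ n)
    (hkodd : Odd k) (hmod : n % (2 * k) = 2)
    (hV : Fintype.card V = n) (L : SimpleGraph V) (hL : L.edgeSet.ncard = 1) :
    k ∣ (joinK L (k - 1)).edgeSet.ncard ∧
    ¬ ∃ D, IsStarDecompOn (joinK L (k - 1)) k D :=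
  stmt8_general k n hk hkodd hmod hV L hL
end
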